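/- (Resiliency characterization via 3-fold Forrelation) Let f : 𝔽₂ⁿ → {1,-1}, let 0 ≤ m < n, and let g : 𝔽₂ⁿ → {1,-1} be defined by g(x) = -1 if wt(x) ≤ m and g(x) = 1 otherwise. Then Φ_{f,g,f} = 1 if and only if f is m-resilient, i.e., if and only if W_f(ω) = 0 for all ω ∈ 𝔽₂ⁿ with wt(ω) ≤ m. -/

import Mathlib

open Finset

/-- The sign character `(-1)^(x·y)` where `x·y = Σᵢ xᵢyᵢ` in `𝔽₂`. -/
noncomputable def chi {n : ℕ} (x y : Fin n → ZMod 2) : ℝ :=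
  (-1 : ℝ) ^ (∑ i, x i * y i).val

/-- A function takes values in `{1, -1}`. -/
noncomputable def IsPM {n : ℕ} (f : (Fin n → ZMod 2) → ℝ) : Prop :=
  ∀ x, f x = 1 ∨ f x = -1

/-- The Walsh transform `W_f(ω) = Σ_x f(x)·(-1)^(x·ω)`. -/
noncomputable def walsh {n : ℕ} (f : (Fin n → ZMod 2) → ℝ) (ω : Fin n → ZMod 2) : ℝ :=
  ∑ x, f x * chi x ω

/-- The 2-fold Forrelation `Φ_{f,g} = 2^{-3n/2} Σ_x f(x) W_g(x)`. -/
noncomputable def forr2 {n : ℕ} (f g : (Fin n → ZMod 2) → ℝ) : ℝ :=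
  (2 : ℝ) ^ (-(3 * (n : ℝ)) / 2) * ∑ x, f x * walsh g x

/-- The 3-fold Forrelation. -/
noncomputable def forr3 {n : ℕ} (f₁ f₂ f₃ : (Fin n → ZMod 2) → ℝ) : ℝ :=
  (1 / (2 : ℝ) ^ (2 * n)) *
    ∑ x₁, ∑ x₂, ∑ x₃, f₁ x₁ * chi x₁ x₂ * f₂ x₂ * chi x₂ x₃ * f₃ x₃

/-- The cross-correlation `C_{f,g}(y) = Σ_x f(x)·g(x ⊕ y)`. -/
noncomputable def crossCorr {n : ℕ} (f g : (Fin n → ZMod 2) → ℝ) (y : Fin n → ZMod 2) : ℝ :=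
  ∑ x, f x * g (x + y)

/-- Hamming weight: the number of coordinates equal to `1`. -/
noncomputable def wt {n : ℕ} (x : Fin n → ZMod 2) : ℕ :=
  (Finset.univ.filter (fun i => x i = 1)).card

lemma neg_one_val_add (a b : ZMod 2) :
    ((-1:ℝ))^(a+b).val = (-1:ℝ)^a.val * (-1)^b.val := by
  rcases (show ∀ a : ZMod 2, a = 0 ∨ a = 1 by decide) a with rfl | rfl <;>
  rcases (show ∀ a : ZMod 2, a = 0 ∨ a = 1 by decide) b with rfl | rfl <;>
    norm_num [show ((1:ZMod 2)+1) = 0 from rfl, show ZMod.val (2:ZMod 2) = 0 from rfl, ZMod.val_one]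

lemma chi_comm {n : ℕ} (x y : Fin n → ZMod 2) : chi x y = chi y x := by
  unfold chi; congr 1; exact congrArg _ (Finset.sum_congr rfl fun i _ => mul_comm _ _)

lemma chi_add_left {n : ℕ} (x y ω : Fin n → ZMod 2) :
    chi (x + y) ω = chi x ω * chi y ω := by
  unfold chi
  rw [show (∑ i, (x + y) i * ω i) = (∑ i, x i * ω i) + ∑ i, y i * ω i by
    rw [← Finset.sum_add_distrib]; exact Finset.sum_congr rfl fun i _ => by
      simp [add_mul]]
  exact neg_one_val_add _ _

lemma sum_chi {n : ℕ} (z : Fin n → ZMod 2) :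
    ∑ ω : Fin n → ZMod 2, chi z ω = if z = 0 then (2:ℝ)^n else 0 := by
  split_ifs with h
  · subst h
    have : ∀ ω : Fin n → ZMod 2, chi 0 ω = 1 := by
      intro ω; unfold chi; simp
    simp [this, Finset.card_univ]
  · obtain ⟨i0, hi0⟩ := Function.ne_iff.mp h
    have hi0' : z i0 ≠ 0 := by simpa using hi0
    have hz : z i0 = 1 := by
      have : ∀ a : ZMod 2, a ≠ 0 → a = 1 := by decide
      exact this _ hi0' 
    set e : Fin n → ZMod 2 := Pi.single i0 1 with he
    have key : ∀ ω, chi z (ω + e) = - chi z ω := by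
      intro ω
      unfold chi
      have hs : (∑ i, z i * (ω + e) i) = (∑ i, z i * ω i) + 1 := by
        have : (∑ i, z i * (ω + e) i) = (∑ i, z i * ω i) + ∑ i, z i * e i := by
          rw [← Finset.sum_add_distrib]; exact Finset.sum_congr rfl fun i _ => by
            simp [mul_add]
        rw [this]
        congr 1
        rw [he]
        rw [Finset.sum_eq_single i0]
        · simp [hz]
        · intro b _ hb; simp [Pi.single_eq_of_ne hb]
        · intro hmem; exact absurd (Finset.mem_univ i0) hmem
      rw [hs]
      have : ∀ a : ZMod 2, ((-1:ℝ))^(a+1).val = -((-1:ℝ)^a.val) := by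
        intro a; rcases (show ∀ a : ZMod 2, a = 0 ∨ a = 1 by decide) a with rfl | rfl <;>
          norm_num [show ((1:ZMod 2)+1) = 0 from rfl, show ZMod.val (2:ZMod 2) = 0 from rfl, ZMod.val_one]
      exact this _
    have hsum : (∑ ω : Fin n → ZMod 2, chi z ω)
        = ∑ ω : Fin n → ZMod 2, chi z (ω + e) := by
      exact (Fintype.sum_equiv (Equiv.addRight e) _ _ (fun ω => rfl)).symm
    have h2 : (∑ ω : Fin n → ZMod 2, chi z ω) = - ∑ ω : Fin n → ZMod 2, chi z ω := by
      conv_lhs => rw [hsum]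
      simp [key]
    linarith

lemma parseval {n : ℕ} (f : (Fin n → ZMod 2) → ℝ) :
    ∑ ω : Fin n → ZMod 2, (walsh f ω)^2 = (2:ℝ)^n * ∑ x, (f x)^2 := by
  have expand : ∀ ω : Fin n → ZMod 2, (walsh f ω)^2
      = ∑ x, ∑ y, f x * f y * chi (x + y) ω := by
    intro ω
    rw [sq]
    unfold walsh
    rw [Finset.sum_mul_sum]
    refine Finset.sum_congr rfl fun x _ => Finset.sum_congr rfl fun y _ => ?_
    rw [chi_add_left]; ring
  simp only [expand]
  rw [Finset.sum_comm]
  have : ∀ x : Fin n → ZMod 2,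
      (∑ ω : Fin n → ZMod 2, ∑ y, f x * f y * chi (x + y) ω)
      = (2:ℝ)^n * (f x)^2 := by
    intro x
    rw [Finset.sum_comm]
    have h1 : ∀ y : Fin n → ZMod 2,
        (∑ ω : Fin n → ZMod 2, f x * f y * chi (x + y) ω)
        = f x * f y * (if x + y = 0 then (2:ℝ)^n else 0) := by
      intro y; rw [← Finset.mul_sum, sum_chi]
    simp only [h1]
    rw [Finset.sum_eq_single x]
    · have hxx : x + x = 0 := by
        funext i; exact CharTwo.add_self_eq_zero (x i)
      rw [hxx]; simp [sq]; ring
    · intro y _ hy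
      have : x + y ≠ 0 := by
        intro hc
        apply hy
        have key : ∀ a b : ZMod 2, a + b = 0 → b = a := by decide
        funext i
        exact key _ _ (congrFun hc i)
      simp [this]
    · intro hmem; exact absurd (Finset.mem_univ x) hmem
  simp only [this]
  rw [← Finset.mul_sum]

lemma forr3_eq {n : ℕ} (f g : (Fin n → ZMod 2) → ℝ) :
    forr3 f g f = (1 / (2 : ℝ) ^ (2 * n)) * ∑ ω, g ω * (walsh f ω)^2 := by
  unfold forr3
  congr 1
  rw [Finset.sum_comm]
  refine Finset.sum_congr rfl fun x₂ _ => ?_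
  have : g x₂ * (walsh f x₂)^2
      = g x₂ * ((∑ x₁, f x₁ * chi x₁ x₂) * (∑ x₃, f x₃ * chi x₃ x₂)) := by
    rw [sq]; rfl
  rw [this, Finset.sum_mul_sum, Finset.mul_sum]
  refine Finset.sum_congr rfl fun x₁ _ => ?_
  rw [Finset.mul_sum]
  refine Finset.sum_congr rfl fun x₃ _ => ?_
  rw [chi_comm x₂ x₃]; ring


theorem forr3_resiliency_characterization {n m : ℕ} (hm : m < n)
    (f g : (Fin n → ZMod 2) → ℝ) (hf : IsPM f)
    (hg : ∀ x, g x = if wt x ≤ m then -1 else 1) :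
    forr3 f g f = 1 ↔ ∀ ω, wt ω ≤ m → walsh f ω = 0 := by
  have hfsq : ∀ x, (f x)^2 = 1 := by
    intro x; rcases hf x with h | h <;> rw [h] <;> norm_num
  have hpar : ∑ ω : Fin n → ZMod 2, (walsh f ω)^2 = (2:ℝ)^(2*n) := by
    rw [parseval]
    simp only [hfsq]
    simp [Finset.card_univ, two_mul, pow_add]
  set T : ℝ := ∑ ω ∈ Finset.univ.filter (fun ω : Fin n → ZMod 2 => wt ω ≤ m),
      (walsh f ω)^2 with hT
  have hsplit : ∑ ω : Fin n → ZMod 2, g ω * (walsh f ω)^2 = (2:ℝ)^(2*n) - 2 * T := by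
    have : ∀ ω : Fin n → ZMod 2, g ω * (walsh f ω)^2
        = (walsh f ω)^2 - 2 * (if wt ω ≤ m then (walsh f ω)^2 else 0) := by
      intro ω; rw [hg ω]; split_ifs <;> ring
    simp only [this]
    rw [Finset.sum_sub_distrib, hpar, ← Finset.mul_sum, Finset.sum_ite,
      Finset.sum_const_zero, add_zero, hT]
  have hpow : (0:ℝ) < (2:ℝ)^(2*n) := by positivity
  rw [forr3_eq, hsplit]
  constructor
  · intro h ω hω
    have hT0 : T = 0 := by
      field_simp at h
      linarith
    have := (Finset.sum_eq_zero_iff_of_nonneg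
      (fun ω _ => sq_nonneg (walsh f ω))).mp hT0 ω (by simpa using hω)
    exact pow_eq_zero_iff (by norm_num) |>.mp this
  · intro h
    have hT0 : T = 0 := by
      rw [hT]
      refine Finset.sum_eq_zero fun ω hω => ?_
      rw [h ω (by simpa using hω)]; ring
    rw [hT0]
    field_simp
    simp
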